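/- arXiv:2501.10876 — 2 statements merged into one kernel-verified Lean document; each statement's English description precedes it below -/
import Mathlib

section
/- Let p ∈ [1,∞] and let F : ℝ_{≥0} → ℝ_{≥0} be an increasing bijection (a reparameterization) which is K-Lipschitz for some K > 0, i.e. |F(b) − F(a)| ≤ K|b − a| for all a, b ∈ ℝ_{≥0}. Then for all persistence diagrams D, D' (finite multisets of points in V = {(a,b) ∈ ℝ_{≥0}² : a ≤ b}), one has W_p(F(D), F(D')) ≤ K · W_p(D, D'), where F(D) denotes the persistence diagram obtained by replacing each point (a,b) of D with (F(a), F(b)). -/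
open scoped ENNReal BigOperators

/-- The `p`-norm distance between two points of the plane, valued in `ℝ≥0∞`
(`p = ∞` gives the sup-norm). -/
noncomputable def dp (p : ℝ≥0∞) (x y : ℝ × ℝ) : ℝ≥0∞ :=
  if p = ∞ then max (ENNReal.ofReal |x.1 - y.1|) (ENNReal.ofReal |x.2 - y.2|)
  else (ENNReal.ofReal |x.1 - y.1| ^ p.toReal + ENNReal.ofReal |x.2 - y.2| ^ p.toReal)
      ^ (1 / p.toReal)

/-- Distance (in the `p`-norm) from a point to the diagonal `Δ = {(z,z) : z ≥ 0}`. -/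
noncomputable def dDelta (p : ℝ≥0∞) (x : ℝ × ℝ) : ℝ≥0∞ :=
  ⨅ z ∈ Set.Ici (0 : ℝ), dp p x (z, z)

/-- A persistence diagram: a finite (multi)family of points of the plane. -/
structure PD where
  m : ℕ
  pts : Fin m → ℝ × ℝ

/-- Validity: all points lie in `V = {(a,b) : 0 ≤ a ≤ b}`. -/
def PD.valid (D : PD) : Prop := ∀ i, 0 ≤ (D.pts i).1 ∧ (D.pts i).1 ≤ (D.pts i).2

/-- Applying a reparameterization `F` to each coordinate of each point of a diagram. -/
noncomputable def PD.map (F : ℝ → ℝ) (D : PD) : PD :=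
  ⟨D.m, fun i => (F (D.pts i).1, F (D.pts i).2)⟩

/-- The `p`-norm of a finite family of values in `ℝ≥0∞` (`p = ∞` gives the max). -/
noncomputable def pNormE (p : ℝ≥0∞) {ι : Type} (s : Finset ι) (f : ι → ℝ≥0∞) : ℝ≥0∞ :=
  if p = ∞ then s.sup f else (∑ i ∈ s, f i ^ p.toReal) ^ (1 / p.toReal)

/-- The `p`-norm of a triple of values in `ℝ≥0∞`. -/
noncomputable def pNorm3 (p : ℝ≥0∞) (u v w : ℝ≥0∞) : ℝ≥0∞ :=
  if p = ∞ then max u (max v w)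
  else (u ^ p.toReal + v ^ p.toReal + w ^ p.toReal) ^ (1 / p.toReal)

/-- The `p`-Wasserstein distance between persistence diagrams: the infimum, over all
partial injective matchings `α : I → {1,…,n}` (`I ⊆ {1,…,m}`), of the `p`-norm of the
triple (cost of matched points, cost of unmatched points of `D` to the diagonal,
cost of unmatched points of `D'` to the diagonal). -/
noncomputable def Wdist (p : ℝ≥0∞) (D D' : PD) : ℝ≥0∞ :=
  ⨅ (I : Finset (Fin D.m)) (α : ↥I → Fin D'.m) (_ : Function.Injective α),
    pNorm3 p
      (pNormE p Finset.univ (fun i : ↥I => dp p (D.pts i.1) (D'.pts (α i))))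
      (pNormE p Iᶜ (fun i => dDelta p (D.pts i)))
      (pNormE p (Finset.univ.image α)ᶜ (fun j => dDelta p (D'.pts j)))

open scoped NNReal
open Set

/-! Every cost entering `W_p` is a `p`-norm of coordinate differences, and `p`-norms are
positively homogeneous and monotone. A `K`-Lipschitz map on `[0, ∞)` that preserves `[0, ∞)`
therefore scales the cost of each matching by at most `K` (the diagonal is sent into itself,
so distances to it scale as well), and taking the infimum over matchings gives the bound. -/

lemma ENNReal.rpow_mul_rpow_one_div {c S : ℝ≥0∞} {t : ℝ} (ht : 0 < t) :
    (c ^ t * S) ^ (1 / t) = c * S ^ (1 / t) := by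
  rw [ENNReal.mul_rpow_of_nonneg _ _ (by positivity), ← ENNReal.rpow_mul,
    mul_one_div, div_self ht.ne', ENNReal.rpow_one]

lemma dp_le_mul {p : ℝ≥0∞} (hp : p ≠ 0) (c : ℝ≥0∞) {x y x' y' : ℝ × ℝ}
    (h1 : ENNReal.ofReal |x.1 - y.1| ≤ c * ENNReal.ofReal |x'.1 - y'.1|)
    (h2 : ENNReal.ofReal |x.2 - y.2| ≤ c * ENNReal.ofReal |x'.2 - y'.2|) :
    dp p x y ≤ c * dp p x' y' := by
  unfold dp
  split_ifs with hpt
  · rw [mul_max]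
    exact max_le_max h1 h2
  · have ht : 0 < p.toReal := ENNReal.toReal_pos hp hpt
    calc (ENNReal.ofReal |x.1 - y.1| ^ p.toReal + ENNReal.ofReal |x.2 - y.2| ^ p.toReal)
          ^ (1 / p.toReal)
        ≤ ((c * ENNReal.ofReal |x'.1 - y'.1|) ^ p.toReal
            + (c * ENNReal.ofReal |x'.2 - y'.2|) ^ p.toReal) ^ (1 / p.toReal) := by
          gcongr
      _ = (c ^ p.toReal * (ENNReal.ofReal |x'.1 - y'.1| ^ p.toReal
            + ENNReal.ofReal |x'.2 - y'.2| ^ p.toReal)) ^ (1 / p.toReal) := by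
          rw [ENNReal.mul_rpow_of_nonneg _ _ ht.le, ENNReal.mul_rpow_of_nonneg _ _ ht.le, mul_add]
      _ = _ := ENNReal.rpow_mul_rpow_one_div ht

lemma pNormE_le_mul {p : ℝ≥0∞} (hp : p ≠ 0) (c : ℝ≥0∞) {ι : Type} (s : Finset ι)
    {f g : ι → ℝ≥0∞} (h : ∀ i ∈ s, f i ≤ c * g i) :
    pNormE p s f ≤ c * pNormE p s g := by
  unfold pNormE
  split_ifs with hpt
  · exact Finset.sup_le fun i hi => (h i hi).trans (mul_le_mul_right (Finset.le_sup hi) c)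
  · have ht : 0 < p.toReal := ENNReal.toReal_pos hp hpt
    calc (∑ i ∈ s, f i ^ p.toReal) ^ (1 / p.toReal)
        ≤ (∑ i ∈ s, (c * g i) ^ p.toReal) ^ (1 / p.toReal) := by
          gcongr with i hi
          exact h i hi
      _ = (c ^ p.toReal * ∑ i ∈ s, g i ^ p.toReal) ^ (1 / p.toReal) := by
          simp only [Finset.mul_sum, ENNReal.mul_rpow_of_nonneg _ _ ht.le]
      _ = _ := ENNReal.rpow_mul_rpow_one_div ht

lemma pNorm3_le_mul {p : ℝ≥0∞} (hp : p ≠ 0) (c : ℝ≥0∞) {u v w u' v' w' : ℝ≥0∞}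
    (hu : u ≤ c * u') (hv : v ≤ c * v') (hw : w ≤ c * w') :
    pNorm3 p u v w ≤ c * pNorm3 p u' v' w' := by
  unfold pNorm3
  split_ifs with hpt
  · rw [mul_max, mul_max]
    exact max_le_max hu (max_le_max hv hw)
  · have ht : 0 < p.toReal := ENNReal.toReal_pos hp hpt
    calc (u ^ p.toReal + v ^ p.toReal + w ^ p.toReal) ^ (1 / p.toReal)
        ≤ ((c * u') ^ p.toReal + (c * v') ^ p.toReal + (c * w') ^ p.toReal)
            ^ (1 / p.toReal) := by
          gcongr
      _ = (c ^ p.toReal * (u' ^ p.toReal + v' ^ p.toReal + w' ^ p.toReal)) ^ (1 / p.toReal) := by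
          simp only [ENNReal.mul_rpow_of_nonneg _ _ ht.le, mul_add]
      _ = _ := ENNReal.rpow_mul_rpow_one_div ht

lemma PD.valid.mem {D : PD} (hD : D.valid) (i : Fin D.m) : D.pts i ∈ Ici (0 : ℝ) ×ˢ Ici 0 :=
  ⟨(hD i).1, (hD i).1.trans (hD i).2⟩

lemma dp_map_le {p : ℝ≥0∞} (hp : p ≠ 0) {K : ℝ≥0} {F : ℝ → ℝ} {s : Set ℝ}
    (hF : LipschitzOnWith K F s) {x y : ℝ × ℝ} (hx : x ∈ s ×ˢ s) (hy : y ∈ s ×ˢ s) :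
    dp p (Prod.map F F x) (Prod.map F F y) ≤ K * dp p x y := by
  have hF' : ∀ a ∈ s, ∀ b ∈ s, ENNReal.ofReal |F a - F b| ≤ K * ENNReal.ofReal |a - b| :=
    fun a ha b hb => by simpa only [edist_dist, Real.dist_eq] using hF ha hb
  exact dp_le_mul hp _ (hF' _ hx.1 _ hy.1) (hF' _ hx.2 _ hy.2)

lemma dDelta_map_le {p : ℝ≥0∞} (hp : p ≠ 0) {K : ℝ≥0} (hK : K ≠ 0) {F : ℝ → ℝ}
    (hF : LipschitzOnWith K F (Ici 0)) (hmaps : MapsTo F (Ici 0) (Ici 0)) {x : ℝ × ℝ}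
    (hx : x ∈ Ici (0 : ℝ) ×ˢ Ici 0) :
    dDelta p (Prod.map F F x) ≤ K * dDelta p x := by
  simp only [dDelta, ENNReal.mul_iInf_of_ne (ENNReal.coe_ne_zero.2 hK) ENNReal.coe_ne_top]
  exact le_iInf₂ fun z hz =>
    (iInf₂_le (F z) (hmaps hz)).trans (dp_map_le hp hF hx (y := (z, z)) ⟨hz, hz⟩)

theorem Wdist_map_le {p : ℝ≥0∞} (hp : p ≠ 0) {K : ℝ≥0} (hK : K ≠ 0) {F : ℝ → ℝ}
    (hF : LipschitzOnWith K F (Ici 0)) (hmaps : MapsTo F (Ici 0) (Ici 0)) {D D' : PD}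
    (hD : D.valid) (hD' : D'.valid) :
    Wdist p (D.map F) (D'.map F) ≤ K * Wdist p D D' := by
  simp only [Wdist, ENNReal.mul_iInf_of_ne (ENNReal.coe_ne_zero.2 hK) ENNReal.coe_ne_top]
  refine le_iInf fun I => le_iInf fun α => le_iInf fun hα => ?_
  refine le_trans (iInf_le_of_le I <| iInf_le_of_le α <| iInf_le_of_le hα le_rfl) ?_
  exact pNorm3_le_mul hp _
    (pNormE_le_mul hp _ _ fun i _ => dp_map_le hp hF (hD.mem i.1) (hD'.mem (α i)))
    (pNormE_le_mul hp _ _ fun i _ => dDelta_map_le hp hK hF hmaps (hD.mem i))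
    (pNormE_le_mul hp _ _ fun j _ => dDelta_map_le hp hK hF hmaps (hD'.mem j))

theorem wasserstein_reparam_lipschitz_general
    (p : ℝ≥0∞) (hp : 1 ≤ p) (K : ℝ) (hK : 0 < K) (F : ℝ → ℝ)
    (hbij : Set.BijOn F (Set.Ici (0 : ℝ)) (Set.Ici (0 : ℝ)))
    (hlip : ∀ a ∈ Set.Ici (0 : ℝ), ∀ b ∈ Set.Ici (0 : ℝ), |F b - F a| ≤ K * |b - a|)
    (D D' : PD) (hD : D.valid) (hD' : D'.valid) :
    Wdist p (D.map F) (D'.map F) ≤ ENNReal.ofReal K * Wdist p D D' := by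
  have hF : LipschitzOnWith K.toNNReal F (Ici 0) :=
    LipschitzOnWith.of_dist_le_mul fun a ha b hb => by
      simpa only [Real.dist_eq, Real.coe_toNNReal K hK.le] using hlip b hb a ha
  exact Wdist_map_le (zero_lt_one.trans_le hp).ne' (Real.toNNReal_pos.2 hK).ne' hF
    hbij.mapsTo hD hD'

/-- If `F : ℝ≥0 → ℝ≥0` is an increasing bijection which is `K`-Lipschitz
(`K > 0`), then for all persistence diagrams `D, D'` with points in
`V = {(a,b) : 0 ≤ a ≤ b}` one has `W_p(F(D), F(D')) ≤ K · W_p(D, D')`. -/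
theorem wasserstein_reparam_lipschitz
    (p : ℝ≥0∞) (hp : 1 ≤ p) (K : ℝ) (hK : 0 < K) (F : ℝ → ℝ)
    (hmono : StrictMonoOn F (Set.Ici (0 : ℝ)))
    (hbij : Set.BijOn F (Set.Ici (0 : ℝ)) (Set.Ici (0 : ℝ)))
    (hlip : ∀ a ∈ Set.Ici (0 : ℝ), ∀ b ∈ Set.Ici (0 : ℝ), |F b - F a| ≤ K * |b - a|)
    (D D' : PD) (hD : D.valid) (hD' : D'.valid) :
    Wdist p (D.map F) (D'.map F) ≤ ENNReal.ofReal K * Wdist p D D' :=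
  wasserstein_reparam_lipschitz_general p hp K hK F hbij hlip D D' hD hD'
end

section
/- Let p ∈ [1,∞] and let F : ℝ_{≥0} → ℝ_{≥0} be an increasing bijection which is K-Lipschitz for some K > 0. For a persistence diagram D = {x_i}_{i=1,…,m} with points x_i = (a_i,b_i) ∈ V ordered non-decreasingly by the lifetime ℓ_F(a,b) := F(b) − F(a), define the stable rank vector r_{p,F}(D) = (r_0, r_1, …, r_m) ∈ ℝ^∞ by r_i := 2^{(1−p)/p} ‖(ℓ_F(a_1,b_1), …, ℓ_F(a_{m−i},b_{m−i}))‖_p for i ∈ {0,…,m−1} (with the convention 2^{(1−p)/p} = 2^{−1} when p = ∞) and r_m := 0, extended by zeros to an element of ℝ^∞. Then for all persistence diagrams D, D' one has ‖r_{p,F}(D) − r_{p,F}(D')‖_∞ ≤ K · W_p(D, D'). -/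
open scoped ENNReal NNReal BigOperators

/-- The lifetime of a point `(a,b)` induced by a reparameterization `F`: `ℓ_F(a,b) = F(b) − F(a)`. -/
noncomputable def lifetime (F : ℝ → ℝ) (x : ℝ × ℝ) : ℝ := F x.2 - F x.1

/-- The constant `2^{(1−p)/p}`, with the convention that it equals `2^{-1}` for `p = ∞`. -/
noncomputable def srConst (p : ℝ≥0∞) : ℝ :=
  if p = ∞ then 1 / 2 else (2 : ℝ) ^ ((1 - p.toReal) / p.toReal)

/-- The `p`-norm of a finite real-valued family (`p = ∞` gives the max of absolute values). -/
noncomputable def pNormR (p : ℝ≥0∞) {ι : Type} (s : Finset ι) (f : ι → ℝ) : ℝ :=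
  if p = ∞ then (((s.sup fun i => Real.nnabs (f i)) : ℝ≥0) : ℝ)
  else (∑ i ∈ s, |f i| ^ p.toReal) ^ (1 / p.toReal)

/-- The stable rank vector `r_{p,F}(D) = (r_0, …, r_m, 0, 0, …) ∈ ℝ^∞`, where (for a diagram
whose points are ordered non-decreasingly by lifetime `ℓ_F`)
`r_i = 2^{(1−p)/p} ‖(ℓ_F(x_1), …, ℓ_F(x_{m−i}))‖_p` for `i < m`, and `r_i = 0` for `i ≥ m`. -/
noncomputable def stableRankVec (p : ℝ≥0∞) (F : ℝ → ℝ) (D : PD) : ℕ → ℝ := fun i =>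
  if i < D.m then
    srConst p *
      pNormR p (Finset.univ.filter fun j : Fin D.m => (j : ℕ) < D.m - i)
        (fun j => lifetime F (D.pts j))
  else 0

/-!
Pad the lifetime vectors of `D` and `D'` by zeros to vectors on the common index set
`Fin m ⊕ Fin n`. As the lifetimes are sorted, `r_i` is `2^{(1-p)/p}` times the least `p`-norm of
the padded vector on a subset of `m + n - i` indices, and these least norms of two vectors differ
by at most the `p`-norm of their difference after reindexing one of them by any bijection. A
partial matching yields such a bijection: matched points are exchanged, unmatched points meet
zeros. By the Lipschitz bound and the power-mean inequality `2^{(1-p)/p} (s + t) ≤ ‖(s, t)‖_p`,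
each entry of the difference is at most `K / 2^{(1-p)/p}` times the cost that the matching
charges for that point.
-/

open Finset

section pNormR

variable {p : ℝ≥0∞} {ι κ : Type} {s t : Finset ι} {f g : ι → ℝ}

lemma pNormR_empty (hp : p ≠ 0) : pNormR p ∅ f = 0 := by
  unfold pNormR; split
  · simp
  · next hpi =>
    rw [sum_empty, Real.zero_rpow (one_div_ne_zero (ENNReal.toReal_ne_zero.2 ⟨hp, hpi⟩))]

lemma pNormR_mono (hfg : ∀ i ∈ s, |f i| ≤ |g i|) : pNormR p s f ≤ pNormR p s g := by
  unfold pNormR; split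
  · exact NNReal.coe_le_coe.2 (sup_mono_fun fun i hi => by
      simpa [← NNReal.coe_le_coe] using hfg i hi)
  · exact Real.rpow_le_rpow (by positivity) (sum_le_sum fun i hi =>
      Real.rpow_le_rpow (abs_nonneg _) (hfg i hi) ENNReal.toReal_nonneg) (by positivity)

lemma pNormR_le_of_subset (hst : s ⊆ t) : pNormR p s f ≤ pNormR p t f := by
  unfold pNormR; split
  · exact NNReal.coe_le_coe.2 (sup_mono hst)
  · gcongr

lemma pNormR_image [DecidableEq κ] {e : ι → κ} (he : Set.InjOn e s) (g : κ → ℝ) :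
    pNormR p (s.image e) g = pNormR p s (g ∘ e) := by
  unfold pNormR; split
  · rw [sup_image]; rfl
  · rw [sum_image fun a ha b hb => he ha hb]; rfl

lemma pNormR_const_mul (hp : p ≠ 0) {c : ℝ} (hc : 0 ≤ c) :
    pNormR p s (fun i => c * f i) = c * pNormR p s f := by
  unfold pNormR; split
  · have hmul : (fun i => Real.nnabs (c * f i)) = fun i => c.toNNReal * Real.nnabs (f i) := by
      ext i; simp [hc]
    rw [hmul, ← NNReal.mul_finset_sup, NNReal.coe_mul, Real.coe_toNNReal c hc]
  · next hpi =>
    have hq := ENNReal.toReal_ne_zero.2 ⟨hp, hpi⟩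
    simp_rw [abs_mul, abs_of_nonneg hc, Real.mul_rpow hc (abs_nonneg _), ← mul_sum]
    rw [Real.mul_rpow (by positivity) (by positivity), ← Real.rpow_mul hc, mul_one_div_cancel hq,
      Real.rpow_one]

lemma pNormR_add_le (hp : 1 ≤ p) :
    pNormR p s (fun i => f i + g i) ≤ pNormR p s f + pNormR p s g := by
  unfold pNormR; split
  · rw [← NNReal.coe_add, NNReal.coe_le_coe]
    refine Finset.sup_le fun i hi => ?_
    calc Real.nnabs (f i + g i) ≤ Real.nnabs (f i) + Real.nnabs (g i) := by
          simpa [← NNReal.coe_le_coe] using abs_add_le (f i) (g i)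
      _ ≤ _ := add_le_add (le_sup (f := fun j => Real.nnabs (f j)) hi)
          (le_sup (f := fun j => Real.nnabs (g j)) hi)
  · next hpi => exact Real.Lp_add_le s f g (by simpa using ENNReal.toReal_mono hpi hp)

lemma pNormR_disjSum_elim_zero (hp : p ≠ 0) (s : Finset ι) (t : Finset κ) :
    pNormR p (s.disjSum t) (Sum.elim f 0) = pNormR p s f := by
  unfold pNormR; split
  · simp [sup_disjSum]
  · next hpi =>
    simp [sum_disjSum, Real.zero_rpow (ENNReal.toReal_ne_zero.2 ⟨hp, hpi⟩)]

end pNormR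

section orderStatistics

variable {p : ℝ≥0∞}

lemma Fin.val_le_of_strictMono {a m : ℕ} {g : Fin a → Fin m} (hg : StrictMono g) (t : Fin a) :
    (t : ℕ) ≤ g t := by
  simpa only [Fin.card_Iio] using card_le_card_of_injOn (s := Iio t) (t := Iio (g t)) g
    (fun x hx => by simpa using hg (by simpa using hx)) hg.injective.injOn

lemma pNormR_filter_lt_le_of_monotone {m k : ℕ} {u : Fin m → ℝ} (hu0 : ∀ j, 0 ≤ u j)
    (hu : Monotone u) {A : Finset (Fin m)} (hk : k ≤ A.card) :
    pNormR p (univ.filter fun j : Fin m => (j : ℕ) < k) u ≤ pNormR p A u := by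
  classical
  set T := univ.filter fun j : Fin m => (j : ℕ) < k
  set g := A.orderEmbOfFin rfl
  -- `φ` sends `j < k` to the `j`-th element of `A`, which is at least `j`.
  set φ : Fin m → Fin m := fun j => if h : (j : ℕ) < A.card then g ⟨j, h⟩ else j
  have hφ : ∀ j ∈ T, ∃ h : (j : ℕ) < A.card, φ j = g ⟨j, h⟩ := fun j hj =>
    have h : (j : ℕ) < A.card := lt_of_lt_of_le (mem_filter.1 hj).2 hk
    ⟨h, dif_pos h⟩
  have hinj : Set.InjOn φ T := fun j hj j' hj' hjj' => by
    obtain ⟨h, hφj⟩ := hφ j hj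
    obtain ⟨h', hφj'⟩ := hφ j' hj'
    rw [hφj, hφj'] at hjj'
    exact Fin.ext (Fin.mk.inj_iff.1 (g.injective hjj'))
  calc pNormR p T u ≤ pNormR p T (u ∘ φ) := pNormR_mono fun j hj => by
        obtain ⟨h, hφj⟩ := hφ j hj
        rw [Function.comp_apply, abs_of_nonneg (hu0 j), abs_of_nonneg (hu0 (φ j)), hφj]
        exact hu (Fin.val_le_of_strictMono g.strictMono ⟨j, h⟩)
    _ = pNormR p (T.image φ) u := (pNormR_image hinj u).symm
    _ ≤ pNormR p A u := pNormR_le_of_subset <| image_subset_iff.2 fun j hj => by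
        obtain ⟨h, hφj⟩ := hφ j hj
        exact hφj ▸ A.orderEmbOfFin_mem rfl _

def pNormsOfCard (p : ℝ≥0∞) (k : ℕ) {ι : Type} (f : ι → ℝ) : Set ℝ :=
  (fun S : Finset ι => pNormR p S f) '' {S | S.card = k}

variable {ι κ : Type} [Fintype ι] {k : ℕ} {f : ι → ℝ} {g : κ → ℝ} {r r' : ℝ}

lemma le_add_pNormR_of_mem_lowerBounds (hp : 1 ≤ p) (hf : ∀ x, 0 ≤ f x) (e : ι ≃ κ)
    (hr : r ∈ lowerBounds (pNormsOfCard p k f)) (hr' : r' ∈ pNormsOfCard p k g) :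
    r ≤ r' + pNormR p univ (fun x => |f x - g (e x)|) := by
  classical
  obtain ⟨S', hS', rfl⟩ := hr'
  set S := S'.image e.symm
  have hS : S.image e = S' := by simp [S, image_image]
  calc r ≤ pNormR p S f := hr ⟨S, (card_image_of_injective _ e.symm.injective).trans hS', rfl⟩
    _ ≤ pNormR p S (fun x => g (e x) + |f x - g (e x)|) := pNormR_mono fun x _ => by
        rw [abs_of_nonneg (hf x)]
        exact (by linarith [le_abs_self (f x - g (e x))] : f x ≤ _).trans (le_abs_self _)
    _ ≤ pNormR p S (g ∘ e) + pNormR p S (fun x => |f x - g (e x)|) := pNormR_add_le hp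
    _ ≤ pNormR p S' g + pNormR p univ (fun x => |f x - g (e x)|) := by
        rw [← hS, pNormR_image e.injective.injOn]
        exact add_le_add le_rfl (pNormR_le_of_subset (subset_univ _))

lemma abs_sub_le_pNormR_of_isLeast [Fintype κ] (hp : 1 ≤ p) (hf : ∀ x, 0 ≤ f x) (hg : ∀ y, 0 ≤ g y)
    (e : ι ≃ κ) (hr : IsLeast (pNormsOfCard p k f) r) (hr' : IsLeast (pNormsOfCard p k g) r') :
    |r - r'| ≤ pNormR p univ (fun x => |f x - g (e x)|) := by
  classical
  have hsymm : pNormR p univ (fun y => |g y - f (e.symm y)|)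
      = pNormR p univ (fun x => |f x - g (e x)|) := by
    rw [← image_univ_equiv e, pNormR_image e.injective.injOn]
    simp [Function.comp_def, abs_sub_comm]
  have h := le_add_pNormR_of_mem_lowerBounds hp hf e hr.2 hr'.1
  have h' := le_add_pNormR_of_mem_lowerBounds hp hg e.symm hr'.2 hr.1
  rw [hsymm] at h'
  exact abs_sub_le_iff.2 ⟨by linarith, by linarith⟩

lemma isLeast_pNormsOfCard_sumElim_zero (hp : p ≠ 0) {m : ℕ} {u : Fin m → ℝ}
    (hu0 : ∀ j, 0 ≤ u j) (hu : Monotone u) (n i : ℕ) :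
    IsLeast (pNormsOfCard p (m + n - i) (Sum.elim u (0 : Fin n → ℝ)))
      (pNormR p (univ.filter fun j : Fin m => (j : ℕ) < m - i) u) := by
  refine ⟨⟨(univ.filter fun j : Fin m => (j : ℕ) < m - i).disjSum
      (univ.filter fun j : Fin n => (j : ℕ) < m + n - i - (m - i)), ?_,
      pNormR_disjSum_elim_zero hp _ _⟩, ?_⟩
  · change (_ : Finset _).card = _
    rw [card_disjSum, Fin.card_filter_val_lt, Fin.card_filter_val_lt]
    omega
  · rintro _ ⟨S, hS, rfl⟩
    change _ ≤ pNormR p S _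
    rw [← S.toLeft_disjSum_toRight, pNormR_disjSum_elim_zero hp]
    refine pNormR_filter_lt_le_of_monotone hu0 hu ?_
    have hsplit := S.card_toLeft_add_card_toRight
    have hright : S.toRight.card ≤ n := by simpa using card_le_univ S.toRight
    have hS : S.card = m + n - i := hS
    omega

end orderStatistics

section diagrams

variable {p : ℝ≥0∞} {K : ℝ} {F : ℝ → ℝ}

lemma stableRankVec_eq (hp : p ≠ 0) (D : PD) (i : ℕ) :
    stableRankVec p F D i = srConst p * pNormR p (univ.filter fun j : Fin D.m => (j : ℕ) < D.m - i)
      (fun j => lifetime F (D.pts j)) := by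
  unfold stableRankVec
  split_ifs with hi
  · rfl
  · simp [show D.m - i = 0 by omega, pNormR_empty hp]

lemma srConst_pos : 0 < srConst p := by
  unfold srConst; split <;> positivity

lemma two_rpow_mul_add_le_rpow_add_rpow {q : ℝ} (hq : 1 ≤ q) {x y : ℝ} (hx : 0 ≤ x) (hy : 0 ≤ y) :
    (2 : ℝ) ^ ((1 - q) / q) * (x + y) ≤ (x ^ q + y ^ q) ^ (1 / q) := by
  have hq0 : 0 < q := by linarith
  have hpow : (x + y) ^ q ≤ 2 ^ (q - 1) * (x ^ q + y ^ q) := by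
    simpa [← NNReal.coe_le_coe, hx, hy] using
      NNReal.rpow_add_le_mul_rpow_add_rpow x.toNNReal y.toNNReal hq
  have hroot : x + y ≤ 2 ^ ((q - 1) / q) * (x ^ q + y ^ q) ^ (1 / q) := by
    calc x + y = ((x + y) ^ q) ^ (1 / q) := by
          rw [← Real.rpow_mul (by positivity), mul_one_div_cancel hq0.ne', Real.rpow_one]
      _ ≤ (2 ^ (q - 1) * (x ^ q + y ^ q)) ^ (1 / q) := by gcongr
      _ = _ := by
          rw [Real.mul_rpow (by positivity) (by positivity), ← Real.rpow_mul (by norm_num),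
            mul_one_div]
  have hinv : (2 : ℝ) ^ ((1 - q) / q) * 2 ^ ((q - 1) / q) = 1 := by
    rw [← Real.rpow_add two_pos, ← add_div, sub_add_sub_cancel', sub_self, zero_div,
      Real.rpow_zero]
  calc (2 : ℝ) ^ ((1 - q) / q) * (x + y)
      ≤ 2 ^ ((1 - q) / q) * (2 ^ ((q - 1) / q) * (x ^ q + y ^ q) ^ (1 / q)) := by gcongr
    _ = _ := by rw [← mul_assoc, hinv, one_mul]

lemma ofReal_srConst_mul_le_dp (hp : 1 ≤ p) (x y : ℝ × ℝ) :
    ENNReal.ofReal (srConst p * (|x.1 - y.1| + |x.2 - y.2|)) ≤ dp p x y := by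
  unfold srConst dp
  split
  · rw [← ENNReal.ofReal_max]
    refine ENNReal.ofReal_le_ofReal ?_
    linarith [le_max_left |x.1 - y.1| |x.2 - y.2|, le_max_right |x.1 - y.1| |x.2 - y.2|]
  · next hpi =>
    have hq : 1 ≤ p.toReal := by simpa using ENNReal.toReal_mono hpi hp
    rw [ENNReal.ofReal_rpow_of_nonneg (abs_nonneg _) (by linarith),
      ENNReal.ofReal_rpow_of_nonneg (abs_nonneg _) (by linarith),
      ← ENNReal.ofReal_add (by positivity) (by positivity),
      ENNReal.ofReal_rpow_of_nonneg (by positivity) (by positivity)]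
    exact ENNReal.ofReal_le_ofReal
      (two_rpow_mul_add_le_rpow_add_rpow hq (abs_nonneg _) (abs_nonneg _))

lemma ofReal_srConst_mul_sub_le_dDelta (hp : 1 ≤ p) (x : ℝ × ℝ) :
    ENNReal.ofReal (srConst p * (x.2 - x.1)) ≤ dDelta p x := by
  refine le_iInf₂ fun z _ =>
    le_trans (ENNReal.ofReal_le_ofReal ?_) (ofReal_srConst_mul_le_dp hp _ _)
  refine mul_le_mul_of_nonneg_left ?_ srConst_pos.le
  calc x.2 - x.1 ≤ |x.2 - z| + |z - x.1| := (le_abs_self _).trans (abs_sub_le _ _ _)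
    _ = _ := by rw [abs_sub_comm z]; ring

lemma lifetime_nonneg (hmono : MonotoneOn F (Set.Ici 0)) {x : ℝ × ℝ} (h1 : 0 ≤ x.1)
    (h2 : x.1 ≤ x.2) : 0 ≤ lifetime F x :=
  sub_nonneg.2 (hmono h1 (h1.trans h2) h2)

variable (hlip : ∀ a ∈ Set.Ici (0 : ℝ), ∀ b ∈ Set.Ici (0 : ℝ), |F b - F a| ≤ K * |b - a|)
include hlip

lemma abs_lifetime_sub_le {x y : ℝ × ℝ} (hx1 : 0 ≤ x.1) (hx2 : 0 ≤ x.2) (hy1 : 0 ≤ y.1)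
    (hy2 : 0 ≤ y.2) : |lifetime F x - lifetime F y| ≤ K * (|x.1 - y.1| + |x.2 - y.2|) :=
  calc |lifetime F x - lifetime F y| = |(F x.2 - F y.2) - (F x.1 - F y.1)| := by
        unfold lifetime; ring_nf
    _ ≤ |F x.2 - F y.2| + |F x.1 - F y.1| := abs_sub _ _
    _ ≤ K * |x.2 - y.2| + K * |x.1 - y.1| := add_le_add (hlip _ hy2 _ hx2) (hlip _ hy1 _ hx1)
    _ = _ := by ring

lemma abs_lifetime_le {x : ℝ × ℝ} (h1 : 0 ≤ x.1) (h2 : x.1 ≤ x.2) :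
    |lifetime F x| ≤ K * (x.2 - x.1) := by
  simpa [lifetime, abs_of_nonneg (sub_nonneg.2 h2)] using hlip _ h1 _ (h1.trans h2)

end diagrams

section pNormE

variable {p : ℝ≥0∞} {ι : Type} {s : Finset ι} {f g : ι → ℝ≥0∞}

lemma pNormE_ofReal {f : ι → ℝ} (hf : ∀ i ∈ s, 0 ≤ f i) :
    pNormE p s (fun i => ENNReal.ofReal (f i)) = ENNReal.ofReal (pNormR p s f) := by
  unfold pNormE pNormR; split
  · rw [ENNReal.ofReal_coe_nnreal, ENNReal.coe_finset_sup]
    exact sup_congr rfl fun i hi => by simp [ENNReal.ofReal, Real.nnabs_of_nonneg (hf i hi)]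
  · rw [← ENNReal.ofReal_rpow_of_nonneg (by positivity) (by positivity),
      ENNReal.ofReal_sum_of_nonneg (fun i _ => by positivity)]
    exact congrArg (· ^ _) (sum_congr rfl fun i hi => by
      rw [abs_of_nonneg (hf i hi), ENNReal.ofReal_rpow_of_nonneg (hf i hi) ENNReal.toReal_nonneg])

lemma pNormE_mono (hfg : ∀ i ∈ s, f i ≤ g i) : pNormE p s f ≤ pNormE p s g := by
  unfold pNormE; split
  · exact sup_mono_fun hfg
  · gcongr with i hi
    exact hfg i hi

lemma pNormE_const_mul (hp : p ≠ 0) (c : ℝ≥0∞) :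
    pNormE p s (fun i => c * f i) = c * pNormE p s f := by
  unfold pNormE; split
  · exact (apply_sup_eq_sup_comp (c * ·) (fun _ _ => mul_max_of_nonneg _ _ zero_le)
      (mul_zero c)).symm
  · next hpi =>
    have hq := ENNReal.toReal_pos hp hpi
    simp_rw [ENNReal.mul_rpow_of_nonneg _ _ hq.le, ← mul_sum]
    rw [ENNReal.mul_rpow_of_nonneg _ _ (by positivity), ← ENNReal.rpow_mul,
      mul_one_div_cancel hq.ne', ENNReal.rpow_one]

end pNormE

open Classical in
/-- A partial matching `α : I → κ` of `ι` with `κ`, as the involution of `ι ⊕ κ` exchanging each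
matched pair and fixing all unmatched points. -/
noncomputable def matchingPerm {ι κ : Type} (I : Finset ι) (α : ↥I → κ)
    (hα : Function.Injective α) : Equiv.Perm (ι ⊕ κ) :=
  Equiv.Perm.extendDomain (Equiv.sumComm I I)
    (Equiv.ofInjective (Sum.map Subtype.val α) (Subtype.val_injective.sumMap hα))

section matchingPerm

open Classical

variable {ι κ : Type} {I : Finset ι} {α : ↥I → κ} (hα : Function.Injective α)

lemma matchingPerm_inl_of_mem {i : ι} (h : i ∈ I) :
    matchingPerm I α hα (Sum.inl i) = Sum.inr (α ⟨i, h⟩) :=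
  Equiv.Perm.extendDomain_apply_image (Equiv.sumComm I I) _ (Sum.inl ⟨i, h⟩)

lemma matchingPerm_inr_apply (x : ↥I) :
    matchingPerm I α hα (Sum.inr (α x)) = Sum.inl x.1 :=
  Equiv.Perm.extendDomain_apply_image (Equiv.sumComm I I) _ (Sum.inr x)

lemma matchingPerm_inl_of_not_mem {i : ι} (h : i ∉ I) :
    matchingPerm I α hα (Sum.inl i) = Sum.inl i := by
  refine Equiv.Perm.extendDomain_apply_not_subtype _ _ ?_
  rintro ⟨x | x, hx⟩
  · exact h (Sum.inl_injective hx ▸ x.2)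
  · exact Sum.inr_ne_inl hx

lemma matchingPerm_inr_of_not_mem_range {j : κ} (h : j ∉ Set.range α) :
    matchingPerm I α hα (Sum.inr j) = Sum.inr j := by
  refine Equiv.Perm.extendDomain_apply_not_subtype _ _ ?_
  rintro ⟨x | x, hx⟩
  · exact Sum.inl_ne_inr hx
  · exact h ⟨x, Sum.inr_injective hx⟩

end matchingPerm

section matching

variable {p : ℝ≥0∞} {D D' : PD} {I : Finset (Fin D.m)} {α : ↥I → Fin D'.m}

noncomputable def matchingCost (p : ℝ≥0∞) (D D' : PD) (I : Finset (Fin D.m))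
    (α : ↥I → Fin D'.m) : ℝ≥0∞ :=
  pNorm3 p
    (pNormE p univ (fun i : ↥I => dp p (D.pts i.1) (D'.pts (α i))))
    (pNormE p Iᶜ (fun i => dDelta p (D.pts i)))
    (pNormE p (univ.image α)ᶜ (fun j => dDelta p (D'.pts j)))

lemma Wdist_eq_iInf_matchingCost :
    Wdist p D D' = ⨅ (I : Finset (Fin D.m)) (α : ↥I → Fin D'.m) (_ : Function.Injective α),
      matchingCost p D D' I α :=
  rfl

/-- Entry `inl i` is the cost paid by the point `i` of `D`, entry `inr j` the cost paid by the point
`j` of `D'` if it is unmatched (a matched pair is paid for once, at its point of `D`). -/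
noncomputable def matchingCostVec (p : ℝ≥0∞) (D D' : PD) (I : Finset (Fin D.m))
    (α : ↥I → Fin D'.m) : Fin D.m ⊕ Fin D'.m → ℝ≥0∞ :=
  Sum.elim (fun i => if h : i ∈ I then dp p (D.pts i) (D'.pts (α ⟨i, h⟩)) else dDelta p (D.pts i))
    (fun j => if j ∈ univ.image α then 0 else dDelta p (D'.pts j))

lemma pNormE_matchingCostVec (hp : p ≠ 0) :
    pNormE p univ (matchingCostVec p D D' I α) = matchingCost p D D' I α := by
  classical
  set c := matchingCostVec p D D' I α
  have hI : ∀ x : ↥I, c (Sum.inl x) = dp p (D.pts x) (D'.pts (α x)) := fun x => dif_pos x.2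
  have hIc : ∀ i ∈ Iᶜ, c (Sum.inl i) = dDelta p (D.pts i) := fun i hi => dif_neg (mem_compl.1 hi)
  have himg : ∀ j ∈ univ.image α, c (Sum.inr j) = 0 := fun j hj => if_pos hj
  have himgc : ∀ j ∈ (univ.image α)ᶜ, c (Sum.inr j) = dDelta p (D'.pts j) :=
    fun j hj => if_neg (mem_compl.1 hj)
  unfold matchingCost pNorm3 pNormE
  split_ifs with hpi
  · rw [← univ_disjSum_univ, sup_disjSum, ← union_compl I, sup_union,
      ← union_compl (univ.image α), sup_union, sup_congr rfl himg, sup_congr rfl hIc,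
      sup_congr rfl himgc, ← sup_attach, univ_eq_attach]
    simp [hI, max_assoc]
  · have hq := ENNReal.toReal_pos hp hpi
    have hI' : ∑ i ∈ I, c (Sum.inl i) ^ p.toReal
        = ∑ x : ↥I, dp p (D.pts x) (D'.pts (α x)) ^ p.toReal := by
      rw [← sum_attach I, univ_eq_attach]
      exact sum_congr rfl fun x _ => by rw [hI x]
    have himg' : ∑ j ∈ univ.image α, c (Sum.inr j) ^ p.toReal = 0 :=
      sum_eq_zero fun j hj => by rw [himg j hj, ENNReal.zero_rpow_of_pos hq]
    have hIc' : ∑ i ∈ Iᶜ, c (Sum.inl i) ^ p.toReal = ∑ i ∈ Iᶜ, dDelta p (D.pts i) ^ p.toReal :=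
      sum_congr rfl fun i hi => by rw [hIc i hi]
    have himgc' : ∑ j ∈ (univ.image α)ᶜ, c (Sum.inr j) ^ p.toReal
        = ∑ j ∈ (univ.image α)ᶜ, dDelta p (D'.pts j) ^ p.toReal :=
      sum_congr rfl fun j hj => by rw [himgc j hj]
    rw [← univ_disjSum_univ, sum_disjSum, ← sum_add_sum_compl I, ← sum_add_sum_compl (univ.image α),
      hI', hIc', himg', himgc', zero_add]
    simp only [← ENNReal.rpow_mul, one_div_mul_cancel hq.ne', ENNReal.rpow_one]

end matching

section lipschitz

variable {p : ℝ≥0∞} {K : ℝ} {F : ℝ → ℝ}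
  (hlip : ∀ a ∈ Set.Ici (0 : ℝ), ∀ b ∈ Set.Ici (0 : ℝ), |F b - F a| ≤ K * |b - a|)
include hlip

lemma ofReal_srConst_mul_abs_lifetime_sub_le_dp (hp : 1 ≤ p) (hK : 0 ≤ K) {x y : ℝ × ℝ}
    (hx : 0 ≤ x.1 ∧ x.1 ≤ x.2) (hy : 0 ≤ y.1 ∧ y.1 ≤ y.2) :
    ENNReal.ofReal (srConst p * |lifetime F x - lifetime F y|) ≤ ENNReal.ofReal K * dp p x y :=
  calc ENNReal.ofReal (srConst p * |lifetime F x - lifetime F y|)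
      ≤ ENNReal.ofReal (K * (srConst p * (|x.1 - y.1| + |x.2 - y.2|))) := by
        rw [mul_left_comm]
        exact ENNReal.ofReal_le_ofReal (mul_le_mul_of_nonneg_left
          (abs_lifetime_sub_le hlip hx.1 (hx.1.trans hx.2) hy.1 (hy.1.trans hy.2)) srConst_pos.le)
    _ ≤ ENNReal.ofReal K * dp p x y := by
        rw [ENNReal.ofReal_mul hK]
        gcongr
        exact ofReal_srConst_mul_le_dp hp x y

lemma ofReal_srConst_mul_abs_lifetime_le_dDelta (hp : 1 ≤ p) (hK : 0 ≤ K) {x : ℝ × ℝ}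
    (hx : 0 ≤ x.1 ∧ x.1 ≤ x.2) :
    ENNReal.ofReal (srConst p * |lifetime F x|) ≤ ENNReal.ofReal K * dDelta p x :=
  calc ENNReal.ofReal (srConst p * |lifetime F x|)
      ≤ ENNReal.ofReal (K * (srConst p * (x.2 - x.1))) := by
        rw [mul_left_comm]
        exact ENNReal.ofReal_le_ofReal
          (mul_le_mul_of_nonneg_left (abs_lifetime_le hlip hx.1 hx.2) srConst_pos.le)
    _ ≤ ENNReal.ofReal K * dDelta p x := by
        rw [ENNReal.ofReal_mul hK]
        gcongr
        exact ofReal_srConst_mul_sub_le_dDelta hp x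

variable {D D' : PD} {I : Finset (Fin D.m)} {α : ↥I → Fin D'.m}

lemma ofReal_srConst_mul_le_matchingCostVec (hp : 1 ≤ p) (hK : 0 ≤ K) (hD : D.valid)
    (hD' : D'.valid) (hα : Function.Injective α) (x : Fin D.m ⊕ Fin D'.m) :
    ENNReal.ofReal (srConst p * |Sum.elim (fun i => lifetime F (D.pts i)) 0 x
        - Sum.elim (0 : Fin D.m → ℝ) (fun j => lifetime F (D'.pts j)) (matchingPerm I α hα x)|)
      ≤ ENNReal.ofReal K * matchingCostVec p D D' I α x := by
  rcases x with i | j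
  · by_cases h : i ∈ I
    · rw [matchingPerm_inl_of_mem hα h]
      simpa [matchingCostVec, h] using
        ofReal_srConst_mul_abs_lifetime_sub_le_dp hlip hp hK (hD i) (hD' _)
    · rw [matchingPerm_inl_of_not_mem hα h]
      simpa [matchingCostVec, h] using ofReal_srConst_mul_abs_lifetime_le_dDelta hlip hp hK (hD i)
  · by_cases h : j ∈ Set.range α
    · obtain ⟨x, rfl⟩ := h
      simp [matchingPerm_inr_apply hα]
    · have hj : j ∉ univ.image α := by simpa [Set.mem_range] using h
      rw [matchingPerm_inr_of_not_mem_range hα h]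
      simp only [matchingCostVec, Sum.elim_inr, if_neg hj, Pi.zero_apply, zero_sub, abs_neg]
      exact ofReal_srConst_mul_abs_lifetime_le_dDelta hlip hp hK (hD' j)

end lipschitz

section stableRank

variable {p : ℝ≥0∞} {K : ℝ} {F : ℝ → ℝ} {D D' : PD}

lemma abs_stableRankVec_sub_le (hp : 1 ≤ p) (hmono : MonotoneOn F (Set.Ici 0)) (hD : D.valid)
    (hD' : D'.valid) (hord : Monotone fun j => lifetime F (D.pts j))
    (hord' : Monotone fun j => lifetime F (D'.pts j)) (σ : Equiv.Perm (Fin D.m ⊕ Fin D'.m))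
    (i : ℕ) :
    |stableRankVec p F D i - stableRankVec p F D' i| ≤ srConst p * pNormR p univ fun x =>
      |Sum.elim (fun j => lifetime F (D.pts j)) (0 : Fin D'.m → ℝ) x
        - Sum.elim (0 : Fin D.m → ℝ) (fun j => lifetime F (D'.pts j)) (σ x)| := by
  have hp0 : p ≠ 0 := (zero_lt_one.trans_le hp).ne'
  set u : Fin D.m → ℝ := fun j => lifetime F (D.pts j)
  set v : Fin D'.m → ℝ := fun j => lifetime F (D'.pts j)
  have hu0 : ∀ j, 0 ≤ u j := fun j => lifetime_nonneg hmono (hD j).1 (hD j).2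
  have hv0 : ∀ j, 0 ≤ v j := fun j => lifetime_nonneg hmono (hD' j).1 (hD' j).2
  have hleast := isLeast_pNormsOfCard_sumElim_zero hp0 hu0 hord D'.m i
  have hleast' := isLeast_pNormsOfCard_sumElim_zero hp0 hv0 hord' D.m i
  rw [add_comm] at hleast'
  have hswap : ∀ y,
      Sum.elim v (0 : Fin D.m → ℝ) (Sum.swap y) = Sum.elim (0 : Fin D.m → ℝ) v y := by
    rintro (_ | _) <;> rfl
  rw [stableRankVec_eq hp0, stableRankVec_eq hp0, ← mul_sub, abs_mul, abs_of_pos srConst_pos]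
  refine mul_le_mul_of_nonneg_left ?_ srConst_pos.le
  simpa [hswap] using abs_sub_le_pNormR_of_isLeast hp (Sum.forall.2 ⟨hu0, fun _ => le_rfl⟩)
    (Sum.forall.2 ⟨hv0, fun _ => le_rfl⟩) (σ.trans (Equiv.sumComm _ _)) hleast hleast'

lemma ofReal_abs_stableRankVec_sub_le (hp : 1 ≤ p) (hK : 0 ≤ K)
    (hmono : MonotoneOn F (Set.Ici 0))
    (hlip : ∀ a ∈ Set.Ici (0 : ℝ), ∀ b ∈ Set.Ici (0 : ℝ), |F b - F a| ≤ K * |b - a|)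
    (hD : D.valid) (hD' : D'.valid) (hord : Monotone fun j => lifetime F (D.pts j))
    (hord' : Monotone fun j => lifetime F (D'.pts j))
    {I : Finset (Fin D.m)} {α : ↥I → Fin D'.m} (hα : Function.Injective α) (i : ℕ) :
    ENNReal.ofReal |stableRankVec p F D i - stableRankVec p F D' i|
      ≤ ENNReal.ofReal K * matchingCost p D D' I α := by
  have hp0 : p ≠ 0 := (zero_lt_one.trans_le hp).ne'
  set err : Fin D.m ⊕ Fin D'.m → ℝ := fun x =>
    |Sum.elim (fun j => lifetime F (D.pts j)) 0 x
      - Sum.elim (0 : Fin D.m → ℝ) (fun j => lifetime F (D'.pts j)) (matchingPerm I α hα x)|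
  calc ENNReal.ofReal |stableRankVec p F D i - stableRankVec p F D' i|
      ≤ ENNReal.ofReal (srConst p * pNormR p univ err) := ENNReal.ofReal_le_ofReal
        (abs_stableRankVec_sub_le hp hmono hD hD' hord hord' (matchingPerm I α hα) i)
    _ = pNormE p univ (fun x => ENNReal.ofReal (srConst p * err x)) := by
        rw [← pNormR_const_mul hp0 srConst_pos.le,
          pNormE_ofReal fun x _ => mul_nonneg srConst_pos.le (abs_nonneg _)]
    _ ≤ pNormE p univ (fun x => ENNReal.ofReal K * matchingCostVec p D D' I α x) :=
        pNormE_mono fun x _ => ofReal_srConst_mul_le_matchingCostVec hlip hp hK hD hD' hα x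
    _ = ENNReal.ofReal K * matchingCost p D D' I α := by
        rw [pNormE_const_mul hp0, pNormE_matchingCostVec hp0]

end stableRank

theorem stableRank_lipschitz_general
    (p : ℝ≥0∞) (hp : 1 ≤ p) (K : ℝ) (hK : 0 < K) (F : ℝ → ℝ)
    (hmono : StrictMonoOn F (Set.Ici (0 : ℝ)))
    (hlip : ∀ a ∈ Set.Ici (0 : ℝ), ∀ b ∈ Set.Ici (0 : ℝ), |F b - F a| ≤ K * |b - a|)
    (D D' : PD) (hD : D.valid) (hD' : D'.valid)
    (hord : ∀ i j : Fin D.m, i ≤ j → lifetime F (D.pts i) ≤ lifetime F (D.pts j))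
    (hord' : ∀ i j : Fin D'.m, i ≤ j → lifetime F (D'.pts i) ≤ lifetime F (D'.pts j)) :
    (⨆ i : ℕ, ENNReal.ofReal |stableRankVec p F D i - stableRankVec p F D' i|)
      ≤ ENNReal.ofReal K * Wdist p D D' := by
  refine iSup_le fun i => ?_
  simp only [Wdist_eq_iInf_matchingCost,
    ENNReal.mul_iInf_of_ne (ENNReal.ofReal_pos.2 hK).ne' ENNReal.ofReal_ne_top]
  exact le_iInf fun I => le_iInf fun α => le_iInf fun hα =>
    ofReal_abs_stableRankVec_sub_le hp hK.le hmono.monotoneOn hlip hD hD' hord hord' hα i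

/-- If `F : ℝ≥0 → ℝ≥0` is an increasing bijection which is `K`-Lipschitz
(`K > 0`), then for all persistence diagrams `D, D'` (with points ordered non-decreasingly
by lifetime) one has `‖r_{p,F}(D) − r_{p,F}(D')‖_∞ ≤ K · W_p(D, D')`. -/
theorem stableRank_lipschitz
    (p : ℝ≥0∞) (hp : 1 ≤ p) (K : ℝ) (hK : 0 < K) (F : ℝ → ℝ)
    (hmono : StrictMonoOn F (Set.Ici (0 : ℝ)))
    (hbij : Set.BijOn F (Set.Ici (0 : ℝ)) (Set.Ici (0 : ℝ)))
    (hlip : ∀ a ∈ Set.Ici (0 : ℝ), ∀ b ∈ Set.Ici (0 : ℝ), |F b - F a| ≤ K * |b - a|)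
    (D D' : PD) (hD : D.valid) (hD' : D'.valid)
    (hord : ∀ i j : Fin D.m, i ≤ j → lifetime F (D.pts i) ≤ lifetime F (D.pts j))
    (hord' : ∀ i j : Fin D'.m, i ≤ j → lifetime F (D'.pts i) ≤ lifetime F (D'.pts j)) :
    (⨆ i : ℕ, ENNReal.ofReal |stableRankVec p F D i - stableRankVec p F D' i|)
      ≤ ENNReal.ofReal K * Wdist p D D' :=
  stableRank_lipschitz_general p hp K hK F hmono hlip D D' hD hD' hord hord'
end
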